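/- Let m ≥ 1 be an integer, let θ ∈ [0, 1/2), and let X_1, …, X_m be i.i.d. Rademacher random variables with parameter 1/2 + θ. Then X = Σ_{i=1}^m X_i satisfies P(X > 0) − P(X < 0) ≥ √(2/(π·e))·min{√m·θ, 1}. -/

import Mathlib

/-!
With `p = 1/2 + θ`, the events `X > 0` and `X < 0` are the upper binomial tails `T(p)` and
`T(1 - p)` at `⌊m/2⌋ + 1`, so the gap `g(θ) = T(1/2 + θ) - T(1/2 - θ)` vanishes at `0`. The
derivative of a binomial tail telescopes to a single term, which gives
`g'(u) = ρ (1 - 4u²)^⌊(m-1)/2⌋` with `ρ = 2m C(2j, j) / 4^j`, `j = ⌊m/2⌋`. Bernoulli's inequality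
bounds `∫₀^θ g'` below by `ρ θ (m+2)/(3m)` as long as `mθ² ≤ 1`, and Wallis' bound
`C(2j, j)² ≥ 2·16^j / (π(2j+1))` makes `ρ (m+2)/(3m) ≥ √(2/(πe)) √m` (this only needs `e > 9/4`).
For `θ > 1/√m` use that `g` is increasing.
-/

open Real Finset MeasureTheory ProbabilityTheory

noncomputable def binomialTail (n j : ℕ) (p : ℝ) : ℝ :=
  ∑ k ∈ Ico j (n + 1), (n.choose k : ℝ) * p ^ k * (1 - p) ^ (n - k)

section Counting

variable {Ω ι β : Type*} [Fintype ι] [DecidableEq ι] [DecidableEq β] {X : ι → Ω → β}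

lemma setOf_filter_eq_eq_biInter (b : β) (s : Finset ι) :
    {ω | ({i | X i ω = b} : Finset ι) = s}
      = ⋂ i ∈ (univ : Finset ι), X i ⁻¹' (if i ∈ s then {b} else {b}ᶜ) := by
  ext ω
  simp only [Set.mem_ofPred_eq, Finset.ext_iff, mem_filter, mem_univ, true_and, Set.mem_iInter]
  refine forall_congr' fun i => ?_
  split_ifs with hi <;> simp [hi]

variable [MeasurableSpace Ω] {μ : Measure Ω} [IsProbabilityMeasure μ] [MeasurableSpace β]
  [MeasurableSingletonClass β]

lemma measureReal_filter_eq_eq_pow_mul_pow (hX : ∀ i, Measurable (X i))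
    (hindep : iIndepFun X μ) (b : β) {p : ℝ} (hp : ∀ i, μ.real {ω | X i ω = b} = p) (s : Finset ι) :
    μ.real {ω | ({i | X i ω = b} : Finset ι) = s} = p ^ #s * (1 - p) ^ (Fintype.card ι - #s) := by
  have hsets : ∀ i ∈ (univ : Finset ι), MeasurableSet (if i ∈ s then {b} else {b}ᶜ : Set β) :=
    fun i _ => by split_ifs <;> simp
  have hterm : ∀ i,
      μ.real (X i ⁻¹' (if i ∈ s then {b} else {b}ᶜ)) = if i ∈ s then p else 1 - p := by
    intro i
    split_ifs
    · exact hp i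
    · rw [Set.preimage_compl, measureReal_compl (hX i (measurableSet_singleton b)), probReal_univ]
      exact congrArg (1 - ·) (hp i)
  rw [setOf_filter_eq_eq_biInter, measureReal_def, hindep.measure_inter_preimage_eq_mul univ hsets,
    ENNReal.toReal_prod]
  simp_rw [← measureReal_def, hterm]
  rw [prod_ite, prod_const, prod_const, filter_mem_eq_inter, univ_inter, filter_not,
    filter_mem_eq_inter, univ_inter, card_sdiff, card_univ, inter_univ]

lemma measureReal_le_card_filter_eq_binomialTail (hX : ∀ i, Measurable (X i))
    (hindep : iIndepFun X μ) (b : β) {p : ℝ} (hp : ∀ i, μ.real {ω | X i ω = b} = p) (j : ℕ) :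
    μ.real {ω | j ≤ #{i | X i ω = b}} = binomialTail (Fintype.card ι) j p := by
  set S := (univ : Finset (Finset ι)).filter (j ≤ #·)
  have hS : {ω | j ≤ #{i | X i ω = b}} = (fun ω => ({i | X i ω = b} : Finset ι)) ⁻¹' S := by
    ext ω; simp [S]
  rw [hS, ← sum_measureReal_preimage_singleton S fun s _ => ?meas]
  case meas =>
    change MeasurableSet {ω | _ = s}
    rw [setOf_filter_eq_eq_biInter]
    exact Finset.measurableSet_biInter _ fun i _ => hX i (by split_ifs <;> simp)
  simp_rw [Set.preimage, Set.mem_singleton_iff, measureReal_filter_eq_eq_pow_mul_pow hX hindep b hp]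
  rw [sum_filter, ← powerset_univ,
    sum_powerset_apply_card fun k => if j ≤ k then p ^ k * (1 - p) ^ (Fintype.card ι - k) else 0,
    card_univ, binomialTail]
  simp_rw [smul_ite, smul_zero, nsmul_eq_mul, ← sum_filter, ← mul_assoc]
  congr 1
  ext k
  simp only [mem_filter, mem_range, mem_Ico]
  omega

end Counting

section PlusMinusOne

variable {ι : Type*} [Fintype ι]

lemma sum_pos_iff_card_filter_eq_one {f : ι → ℝ} (hf : ∀ i, f i = 1 ∨ f i = -1) :
    0 < ∑ i, f i ↔ Fintype.card ι / 2 + 1 ≤ #{i | f i = 1} := by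
  have hsum : ∑ i, f i = ∑ i, (2 * (if f i = 1 then 1 else 0) - 1 : ℝ) :=
    sum_congr rfl fun i _ => by rcases hf i with h | h <;> norm_num [h]
  rw [hsum, sum_sub_distrib, ← mul_sum, sum_boole, sum_const, card_univ, nsmul_one, sub_pos]
  norm_cast
  omega

lemma sum_neg_iff_card_filter_eq_neg_one {f : ι → ℝ} (hf : ∀ i, f i = 1 ∨ f i = -1) :
    ∑ i, f i < 0 ↔ Fintype.card ι / 2 + 1 ≤ #{i | f i = -1} := by
  have := sum_pos_iff_card_filter_eq_one (f := -f) fun i => by rcases hf i with h | h <;> simp [h]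
  simpa [neg_eq_iff_eq_neg] using this

end PlusMinusOne

theorem measureReal_sum_pos_sub_measureReal_sum_neg {Ω ι : Type*} [MeasurableSpace Ω]
    {μ : Measure Ω} [IsProbabilityMeasure μ] [Fintype ι] [DecidableEq ι] {X : ι → Ω → ℝ}
    (hX : ∀ i, Measurable (X i)) (hrange : ∀ i ω, X i ω = 1 ∨ X i ω = -1) (hindep : iIndepFun X μ)
    {p : ℝ} (hp : ∀ i, μ.real {ω | X i ω = 1} = p) :
    μ.real {ω | 0 < ∑ i, X i ω} - μ.real {ω | ∑ i, X i ω < 0}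
      = binomialTail (Fintype.card ι) (Fintype.card ι / 2 + 1) p
        - binomialTail (Fintype.card ι) (Fintype.card ι / 2 + 1) (1 - p) := by
  have hq : ∀ i, μ.real {ω | X i ω = -1} = 1 - p := fun i => by
    have : {ω | X i ω = -1} = {ω | X i ω = 1}ᶜ := by
      ext ω; rcases hrange i ω with h | h <;> norm_num [h]
    have hmeas : MeasurableSet {ω | X i ω = 1} := hX i (measurableSet_singleton 1)
    rw [this, measureReal_compl hmeas, probReal_univ, hp]
  have hpos : {ω | 0 < ∑ i, X i ω} = {ω | Fintype.card ι / 2 + 1 ≤ #{i | X i ω = 1}} :=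
    Set.ext fun ω => sum_pos_iff_card_filter_eq_one (hrange · ω)
  have hneg : {ω | ∑ i, X i ω < 0} = {ω | Fintype.card ι / 2 + 1 ≤ #{i | X i ω = -1}} :=
    Set.ext fun ω => sum_neg_iff_card_filter_eq_neg_one (hrange · ω)
  rw [hpos, hneg, measureReal_le_card_filter_eq_binomialTail hX hindep 1 hp,
    measureReal_le_card_filter_eq_binomialTail hX hindep (-1) hq]

lemma hasDerivAt_choose_mul_pow_mul_pow (n k : ℕ) (hk : k ≤ n) (p : ℝ) :
    HasDerivAt (fun p : ℝ => ((n + 1).choose (k + 1) : ℝ) * p ^ (k + 1) * (1 - p) ^ (n - k))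
      ((n + 1) * n.choose k * p ^ k * (1 - p) ^ (n - k)
        - (n + 1) * n.choose (k + 1) * p ^ (k + 1) * (1 - p) ^ (n - (k + 1))) p := by
  have hp := (hasDerivAt_pow (k + 1) p).const_mul ((n + 1).choose (k + 1) : ℝ)
  have hq := ((hasDerivAt_id' p).const_sub 1).fun_pow (n - k)
  refine (hp.fun_mul hq).congr_deriv ?_
  have h1 : ((n + 1 : ℕ) : ℝ) * n.choose k = (n + 1).choose (k + 1) * (k + 1) := by
    exact_mod_cast Nat.add_one_mul_choose_eq n k
  have h2 := Nat.choose_mul_succ_eq n (k + 1)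
  obtain ⟨d, rfl⟩ := Nat.exists_eq_add_of_le hk
  push_cast at h1
  rcases d with _ | d
  · simp [Nat.choose_succ_self]
  · rw [show k + (d + 1) + 1 - (k + 1) = d + 1 by omega] at h2
    have h2' : (((k + (d + 1)).choose (k + 1) : ℕ) : ℝ) * (k + (d + 1) + 1)
        = ((k + (d + 1) + 1).choose (k + 1) : ℕ) * (d + 1) := by exact_mod_cast h2
    simp only [show k + (d + 1) - k = d + 1 by omega, show k + (d + 1) - (k + 1) = d by omega,
      Nat.add_sub_cancel, pow_succ]
    push_cast at h1 h2' ⊢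
    linear_combination -(p ^ k * ((1 - p) ^ d * (1 - p))) * h1 + p ^ k * p * (1 - p) ^ d * h2'

lemma hasDerivAt_binomialTail (n j : ℕ) (p : ℝ) :
    HasDerivAt (binomialTail (n + 1) (j + 1))
      ((n + 1) * n.choose j * p ^ j * (1 - p) ^ (n - j)) p := by
  set F : ℕ → ℝ := fun k => (n + 1) * n.choose k * p ^ k * (1 - p) ^ (n - k)
  have htail : binomialTail (n + 1) (j + 1) = fun p : ℝ =>
      ∑ k ∈ Ico j (n + 1), ((n + 1).choose (k + 1) : ℝ) * p ^ (k + 1) * (1 - p) ^ (n - k) := by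
    ext p
    rw [binomialTail, ← sum_Ico_add']
    simp
  have hsum := HasDerivAt.fun_sum fun k (hk : k ∈ Ico j (n + 1)) =>
    hasDerivAt_choose_mul_pow_mul_pow n k (Nat.lt_succ_iff.1 (mem_Ico.1 hk).2) p
  rw [htail]
  refine hsum.congr_deriv ?_
  change ∑ k ∈ Ico j (n + 1), (F k - F (k + 1)) = F j
  rcases le_or_gt j (n + 1) with hj | hj
  · have hF : F (n + 1) = 0 := by simp [F]
    calc ∑ k ∈ Ico j (n + 1), (F k - F (k + 1))
        = -∑ k ∈ Ico j (n + 1), (F (k + 1) - F k) := by simp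
      _ = F j := by rw [sum_Ico_sub F hj, hF]; ring
  · simp [F, Nat.choose_eq_zero_of_lt (by omega : n < j), Ico_eq_empty_of_le hj.le]

lemma centralBinom_succ_eq_two_mul_choose (t : ℕ) :
    (t + 1).centralBinom = 2 * (2 * t + 1).choose (t + 1) := by
  rw [Nat.centralBinom_eq_two_mul_choose, show 2 * (t + 1) = 2 * t + 1 + 1 by ring,
    Nat.choose_succ_succ, ← Nat.choose_symm_half]
  ring

lemma choose_mul_pow_add_pow_eq (n : ℕ) {p q : ℝ} (hpq : p + q = 1) :
    (n + 1) * n.choose ((n + 1) / 2)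
        * (p ^ ((n + 1) / 2) * q ^ (n - (n + 1) / 2) + q ^ ((n + 1) / 2) * p ^ (n - (n + 1) / 2))
      = 2 * (n + 1) * ((n + 1) / 2).centralBinom / 4 ^ ((n + 1) / 2) * (4 * p * q) ^ (n / 2) := by
  obtain ⟨t, rfl | rfl⟩ := Nat.even_or_odd' n
  · rw [show (2 * t + 1) / 2 = t by omega, show 2 * t - t = t by omega, show 2 * t / 2 = t by omega,
      Nat.centralBinom_eq_two_mul_choose, mul_pow, mul_pow]
    field_simp
    ring
  · rw [show (2 * t + 1 + 1) / 2 = t + 1 by omega, show 2 * t + 1 - (t + 1) = t by omega,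
      show (2 * t + 1) / 2 = t by omega, centralBinom_succ_eq_two_mul_choose, mul_pow, mul_pow]
    have hsym : p ^ (t + 1) * q ^ t + q ^ (t + 1) * p ^ t = (p * q) ^ t := by
      rw [mul_pow]; linear_combination p ^ t * q ^ t * hpq
    rw [hsym]
    push_cast
    field_simp
    ring

noncomputable def majorityGap (m : ℕ) (θ : ℝ) : ℝ :=
  binomialTail m (m / 2 + 1) (1 / 2 + θ) - binomialTail m (m / 2 + 1) (1 / 2 - θ)

lemma hasDerivAt_majorityGap {m : ℕ} (hm : 1 ≤ m) (u : ℝ) :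
    HasDerivAt (majorityGap m)
      (2 * m * (m / 2).centralBinom / 4 ^ (m / 2) * (1 - 4 * u ^ 2) ^ ((m - 1) / 2)) u := by
  obtain ⟨n, rfl⟩ := Nat.exists_eq_add_of_le' hm
  have h1 := (hasDerivAt_binomialTail n ((n + 1) / 2) (1 / 2 + u)).comp u
    ((hasDerivAt_id' u).const_add (1 / 2))
  have h2 := (hasDerivAt_binomialTail n ((n + 1) / 2) (1 / 2 - u)).comp u
    ((hasDerivAt_id' u).const_sub (1 / 2))
  refine (h1.sub h2).congr_deriv ?_
  have key := choose_mul_pow_add_pow_eq n (p := 1 / 2 + u) (q := 1 / 2 - u) (by ring)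
  rw [show 4 * (1 / 2 + u) * (1 / 2 - u) = 1 - 4 * u ^ 2 by ring] at key
  rw [Nat.add_sub_cancel, show 1 - (1 / 2 + u) = 1 / 2 - u by ring,
    show 1 - (1 / 2 - u) = 1 / 2 + u by ring]
  push_cast
  rw [← key]
  ring

lemma majorityGap_eq_integral {m : ℕ} (hm : 1 ≤ m) (θ : ℝ) :
    majorityGap m θ = 2 * m * (m / 2).centralBinom / 4 ^ (m / 2)
      * ∫ u in 0..θ, (1 - 4 * u ^ 2) ^ ((m - 1) / 2) := by
  rw [← intervalIntegral.integral_const_mul, intervalIntegral.integral_eq_sub_of_hasDerivAt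
    (fun u _ => hasDerivAt_majorityGap hm u) (by apply Continuous.intervalIntegrable; fun_prop)]
  simp [majorityGap]

lemma two_mul_sixteen_pow_le_pi_mul_centralBinom_sq (n : ℕ) :
    2 * 16 ^ n ≤ π * (2 * n + 1) * (n.centralBinom : ℝ) ^ 2 := by
  have hW := Wallis.W_le n
  have hfact : ((2 * n).factorial : ℝ) = n.centralBinom * n.factorial * n.factorial := by
    have := Nat.choose_mul_factorial_mul_factorial (show n ≤ 2 * n by omega)
    rw [show 2 * n - n = n by omega] at this
    exact_mod_cast this.symm
  have hc : (0 : ℝ) < n.centralBinom := by exact_mod_cast n.centralBinom_pos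
  rw [Wallis.W_eq_factorial_ratio, hfact, pow_mul, div_le_div_iff₀ (by positivity) two_pos] at hW
  refine le_of_mul_le_mul_right ?_ (by positivity : (0 : ℝ) < n.factorial ^ 4)
  convert hW using 1 <;> norm_num <;> ring

lemma sqrt_two_div_pi_exp_mul_sqrt_le (m : ℕ) :
    √(2 / (π * exp 1)) * √m ≤ 2 * (m + 2) / 3 * ((m / 2).centralBinom / 4 ^ (m / 2)) := by
  set j := m / 2
  set x : ℝ := (j.centralBinom / 4 ^ j) ^ 2
  have hx : 2 ≤ π * (m + 1) * x := by
    have hj : (2 * j + 1 : ℝ) ≤ m + 1 := by exact_mod_cast (show 2 * j + 1 ≤ m + 1 by omega)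
    have h4 : ((4 : ℝ) ^ j) ^ 2 = 16 ^ j := by rw [← pow_mul, mul_comm, pow_mul]; norm_num
    have hx16 : x * 16 ^ j = j.centralBinom ^ 2 := by
      simp only [x, div_pow, h4]; field_simp
    refine le_of_mul_le_mul_right ?_ (by positivity : (0 : ℝ) < 16 ^ j)
    rw [mul_assoc _ x, hx16]
    calc 2 * 16 ^ j ≤ π * (2 * j + 1) * (j.centralBinom : ℝ) ^ 2 :=
          two_mul_sixteen_pow_le_pi_mul_centralBinom_sq j
      _ ≤ π * (m + 1) * (j.centralBinom : ℝ) ^ 2 := by gcongr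
  have he : 9 / 4 < exp 1 := by linarith [exp_one_gt_d9]
  rw [← sqrt_mul (by positivity), sqrt_le_left (by positivity), mul_pow, div_mul_eq_mul_div,
    div_le_iff₀ (by positivity)]
  have hm : (0 : ℝ) ≤ m := m.cast_nonneg
  nlinarith [mul_le_mul_of_nonneg_left hx (by positivity : (0 : ℝ) ≤ 4 * (m + 2) ^ 2 * exp 1)]

lemma sub_le_integral_one_sub_four_mul_sq_pow (n : ℕ) {θ : ℝ} (h0 : 0 ≤ θ) (h1 : 2 * θ ^ 2 ≤ 1) :
    θ - 4 * n * θ ^ 3 / 3 ≤ ∫ u in 0..θ, (1 - 4 * u ^ 2) ^ n := by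
  have hpoly : ∫ u in 0..θ, (1 - 4 * n * u ^ 2) = θ - 4 * n * θ ^ 3 / 3 := by
    rw [intervalIntegral.integral_sub intervalIntegrable_const
      (by apply Continuous.intervalIntegrable; fun_prop), intervalIntegral.integral_const_mul,
      integral_pow]
    simp only [intervalIntegral.integral_const, sub_zero, smul_eq_mul, mul_one]
    ring
  rw [← hpoly]
  refine intervalIntegral.integral_mono_on h0 (by apply Continuous.intervalIntegrable; fun_prop)
    (by apply Continuous.intervalIntegrable; fun_prop) fun u hu => ?_
  have hu2 : 2 * u ^ 2 ≤ 1 := by nlinarith [hu.1, hu.2]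
  have := one_add_mul_le_pow (a := -(4 * u ^ 2)) (by linarith) n
  rw [← sub_eq_add_neg] at this
  linarith

lemma monotoneOn_integral_one_sub_four_mul_sq_pow (n : ℕ) :
    MonotoneOn (fun θ => ∫ u in 0..θ, (1 - 4 * u ^ 2) ^ n) (Set.Icc 0 (1 / 2)) := by
  intro a ha b hb hab
  have hint : ∀ c, IntervalIntegrable (fun u : ℝ => (1 - 4 * u ^ 2) ^ n) volume 0 c :=
    fun c => by apply Continuous.intervalIntegrable; fun_prop
  rw [← sub_nonneg, intervalIntegral.integral_interval_sub_left (hint b) (hint a)]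
  refine intervalIntegral.integral_nonneg hab fun u hu => pow_nonneg ?_ n
  nlinarith [ha.1, hb.2, hu.1, hu.2]

lemma le_integral_one_sub_four_mul_sq_pow {m : ℕ} (hm : 1 ≤ m) {θ : ℝ} (h0 : 0 ≤ θ)
    (h1 : θ ≤ 1 / 2) :
    (m + 2) / (3 * m) * min θ (1 / √m) ≤ ∫ u in 0..θ, (1 - 4 * u ^ 2) ^ ((m - 1) / 2) := by
  set θ' := min θ (1 / √m)
  have hm1 : (1 : ℝ) ≤ m := by exact_mod_cast hm
  have h0' : 0 ≤ θ' := le_min h0 (by positivity)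
  have hle : θ' ≤ θ := min_le_left _ _
  have hsq : m * θ' ^ 2 ≤ 1 := by
    have : θ' ^ 2 ≤ (1 / √m) ^ 2 := pow_le_pow_left₀ h0' (min_le_right _ _) 2
    rwa [div_pow, sq_sqrt (by linarith), le_div_iff₀ (by linarith), one_pow, mul_comm] at this
  have hb : 2 * (((m - 1) / 2 : ℕ) : ℝ) ≤ m - 1 := by
    have : (2 * (((m - 1) / 2 : ℕ) : ℝ)) + 1 ≤ m := by
      exact_mod_cast (show 2 * ((m - 1) / 2) + 1 ≤ m by omega)
    linarith
  calc (m + 2) / (3 * m) * θ' ≤ θ' - 4 * ((m - 1) / 2 : ℕ) * θ' ^ 3 / 3 := by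
        rw [div_mul_eq_mul_div, div_le_iff₀ (by positivity)]
        nlinarith [mul_le_mul_of_nonneg_left hsq (mul_nonneg (by linarith : (0 : ℝ) ≤ m - 1) h0'),
          mul_le_mul_of_nonneg_right hb (by positivity : 0 ≤ m * θ' ^ 3)]
    _ ≤ ∫ u in 0..θ', (1 - 4 * u ^ 2) ^ ((m - 1) / 2) :=
        sub_le_integral_one_sub_four_mul_sq_pow _ h0' (by nlinarith)
    _ ≤ ∫ u in 0..θ, (1 - 4 * u ^ 2) ^ ((m - 1) / 2) :=
        monotoneOn_integral_one_sub_four_mul_sq_pow _ ⟨h0', hle.trans h1⟩ ⟨h0, h1⟩ hle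

lemma le_majorityGap {m : ℕ} (hm : 1 ≤ m) {θ : ℝ} (h0 : 0 ≤ θ) (h1 : θ ≤ 1 / 2) :
    √(2 / (π * exp 1)) * min (√m * θ) 1 ≤ majorityGap m θ := by
  have hm0 : (0 : ℝ) < m := by exact_mod_cast hm
  have hsm : 0 < √m := sqrt_pos.2 hm0
  have hmin : min (√m * θ) 1 = √m * min θ (1 / √m) := by
    rw [mul_min_of_nonneg _ _ hsm.le, mul_one_div_cancel hsm.ne']
  have hθ' : 0 ≤ min θ (1 / √m) := le_min h0 (by positivity)
  rw [majorityGap_eq_integral hm, hmin, ← mul_assoc]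
  calc √(2 / (π * exp 1)) * √m * min θ (1 / √m)
      ≤ 2 * (m + 2) / 3 * ((m / 2).centralBinom / 4 ^ (m / 2)) * min θ (1 / √m) :=
        mul_le_mul_of_nonneg_right (sqrt_two_div_pi_exp_mul_sqrt_le m) hθ'
    _ = 2 * m * (m / 2).centralBinom / 4 ^ (m / 2) * ((m + 2) / (3 * m) * min θ (1 / √m)) := by
        field_simp
    _ ≤ _ :=
        mul_le_mul_of_nonneg_left (le_integral_one_sub_four_mul_sq_pow hm h0 h1) (by positivity)

theorem rademacher_sum_majority_gap
    {Ω : Type*} [MeasurableSpace Ω] (μ : Measure Ω) [IsProbabilityMeasure μ]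
    (m : ℕ) (hm : 1 ≤ m) (θ : ℝ) (hθ0 : 0 ≤ θ) (hθ1 : θ < 1 / 2)
    (X : Fin m → Ω → ℝ)
    (hmeas : ∀ i, Measurable (X i))
    (hrange : ∀ i ω, X i ω = 1 ∨ X i ω = -1)
    (hindep : iIndepFun X μ)
    (hdist : ∀ i, μ {ω | X i ω = 1} = ENNReal.ofReal (1 / 2 + θ)) :
    (μ {ω | 0 < ∑ i, X i ω}).toReal - (μ {ω | (∑ i, X i ω) < 0}).toReal ≥
      Real.sqrt (2 / (Real.pi * Real.exp 1)) * min (Real.sqrt m * θ) 1 := by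
  have hp : ∀ i, μ.real {ω | X i ω = 1} = 1 / 2 + θ := fun i => by
    rw [measureReal_def, hdist, ENNReal.toReal_ofReal (by linarith)]
  have hgap := measureReal_sum_pos_sub_measureReal_sum_neg hmeas hrange hindep hp
  rw [Fintype.card_fin, show 1 - (1 / 2 + θ) = 1 / 2 - θ by ring] at hgap
  rw [ge_iff_le, ← measureReal_def, ← measureReal_def, hgap]
  exact le_majorityGap hm hθ0 hθ1.le
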